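/- arXiv:1808.04184 — 3 statements merged into one kernel-verified Lean document; each statement's English description precedes it below -/
import Mathlib

section
/- Let λ ≥ 1, let σ² > 0, and let Σ_YY ∈ ℝ^{m×m} be positive definite. Then the function f(Σ_AA) = −(λ−1) log det(Σ_YY + Σ_AA) − log det(Σ_AA + σ²I_m) + λ tr(Σ_YY⁻¹ Σ_AA) is convex on the set of positive semidefinite m×m real matrices. -/
/-!
The cost is `−(λ−1)` times one log-determinant, minus another, plus a linear term, each
log-determinant being `log det` precomposed with a translation that maps positive semidefinite
matrices into positive definite ones. So everything rests on concavity of `log det` on positive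
definite matrices. Writing `M = S²` with `S = √M` and `C = S⁻¹ N S⁻¹`, one has
`a M + b N = S (a + b C) S`, and `a + b C` has eigenvalues `a + b μᵢ` where `μᵢ` are those of `C`;
hence `log det (a M + b N) = log det M + ∑ log (a + b μᵢ) ≥ log det M + b ∑ log μᵢ`
by concavity of the scalar logarithm, which is `a log det M + b log det N`.
-/

open Matrix
open scoped MatrixOrder

namespace Matrix

variable {n : Type*}

lemma convex_setOf_posSemidef : Convex ℝ {A : Matrix n n ℝ | A.PosSemidef} :=
  fun _ hA _ hB _ _ ha hb _ => (hA.smul ha).add (hB.smul hb)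

lemma convex_setOf_posDef : Convex ℝ {A : Matrix n n ℝ | A.PosDef} := by
  intro A hA B hB a b ha hb hab
  rcases ha.eq_or_lt with rfl | ha
  · simp_all
  · exact (hA.smul ha).add_posSemidef (hB.posSemidef.smul hb)

variable [Fintype n] [DecidableEq n]

lemma IsHermitian.det_cfc {A : Matrix n n ℝ} (hA : A.IsHermitian) (f : ℝ → ℝ) :
    (cfc f A).det = ∏ i, f (hA.eigenvalues i) := by
  simp [hA.cfc_eq, IsHermitian.cfc, -Unitary.conjStarAlgAut_apply]

lemma PosDef.mul_log_det_le_log_det_smul_one_add_smul {C : Matrix n n ℝ} (hC : C.PosDef)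
    {a b : ℝ} (ha : 0 ≤ a) (hb : 0 ≤ b) (hab : a + b = 1) :
    b * Real.log C.det ≤ Real.log (a • (1 : Matrix n n ℝ) + b • C).det := by
  set μ := hC.isHermitian.eigenvalues
  have hμ : ∀ i, 0 < μ i := hC.eigenvalues_pos
  have hcfc : a • (1 : Matrix n n ℝ) + b • C = cfc (fun x => a + b * x) C := by
    rw [cfc_const_add a (b * ·) C, cfc_const_mul_id b C, Algebra.algebraMap_eq_smul_one]
  have hpos (i : n) : 0 < a + b * μ i := by
    rcases ha.eq_or_lt with rfl | ha
    · simpa [show b = 1 by linarith] using hμ i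
    · exact add_pos_of_pos_of_nonneg ha (mul_nonneg hb (hμ i).le)
  have hdet : C.det = ∏ i, μ i := by simpa using hC.isHermitian.det_eq_prod_eigenvalues
  rw [hcfc, hC.isHermitian.det_cfc, hdet, Real.log_prod fun i _ => (hpos i).ne',
    Real.log_prod fun i _ => (hμ i).ne', Finset.mul_sum]
  gcongr with i
  simpa using strictConcaveOn_log_Ioi.concaveOn.2 (Set.mem_Ioi.mpr one_pos)
    (Set.mem_Ioi.mpr (hμ i)) ha hb hab

theorem concaveOn_log_det :
    ConcaveOn ℝ {M : Matrix n n ℝ | M.PosDef} (fun M => Real.log M.det) := by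
  refine ⟨convex_setOf_posDef, fun M hM N hN a b ha hb hab => ?_⟩
  obtain ⟨hS, hSS⟩ :=
    CStarAlgebra.isStrictlyPositive_iff_isStrictlyPositive_sqrt_and_eq_sqrt_mul_sqrt.mp
      hM.isStrictlyPositive
  set S := CFC.sqrt M
  have hSdet : IsUnit S.det := (isUnit_iff_isUnit_det S).mp hS.isUnit
  set C := S⁻¹ * N * S⁻¹
  have hC : C.PosDef := by
    have hinj : Function.Injective (S⁻¹).mulVec :=
      mulVec_injective_iff_isUnit.mpr (isUnit_nonsing_inv_iff.mpr hS.isUnit)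
    have := hN.conjTranspose_mul_mul_same hinj
    rwa [hS.posDef.inv.1.eq] at this
  have hN_eq : N = S * C * S := by
    simp only [C, Matrix.mul_assoc, mul_nonsing_inv_cancel_left _ _ hSdet,
      nonsing_inv_mul_cancel_right _ _ hSdet]
  have hcomb : a • M + b • N = S * (a • (1 : Matrix n n ℝ) + b • C) * S := by
    rw [hSS, hN_eq]
    simp only [Matrix.mul_add, Matrix.add_mul, Matrix.mul_smul, Matrix.smul_mul, Matrix.mul_one]
  have hdet_conj (X : Matrix n n ℝ) : (S * X * S).det = M.det * X.det := by
    rw [hSS, det_mul, det_mul, det_mul]; ring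
  have hI : (a • (1 : Matrix n n ℝ) + b • C).PosDef :=
    convex_setOf_posDef PosDef.one hC ha hb hab
  dsimp only
  rw [smul_eq_mul, smul_eq_mul, hcomb, hN_eq, hdet_conj, hdet_conj,
    Real.log_mul hM.det_pos.ne' hC.det_pos.ne', Real.log_mul hM.det_pos.ne' hI.det_pos.ne']
  linear_combination hC.mul_log_det_le_log_det_smul_one_add_smul ha hb hab + Real.log M.det * hab

end Matrix

/-- For `λ ≥ 1`, `σ² > 0` and `Σ_YY` positive definite, the attack cost function
`f(Σ_AA) = −(λ−1) log det(Σ_YY + Σ_AA) − log det(Σ_AA + σ²I) + λ tr(Σ_YY⁻¹ Σ_AA)`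
is convex on the set of positive semidefinite matrices. -/
theorem cost_function_convexOn (m : ℕ) (l : ℝ) (hl : 1 ≤ l) (σ2 : ℝ) (hσ2 : 0 < σ2)
    (Syy : Matrix (Fin m) (Fin m) ℝ) (hSyy : Syy.PosDef) :
    ConvexOn ℝ {A : Matrix (Fin m) (Fin m) ℝ | A.PosSemidef}
      (fun A : Matrix (Fin m) (Fin m) ℝ =>
        -(l - 1) * Real.log (Syy + A).det
          - Real.log (A + σ2 • (1 : Matrix (Fin m) (Fin m) ℝ)).det
          + l * (Syy⁻¹ * A).trace) := by
  have hconv := convex_setOf_posSemidef (n := Fin m)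
  have hsignal : ConcaveOn ℝ {A : Matrix (Fin m) (Fin m) ℝ | A.PosSemidef}
      (fun A => Real.log (Syy + A).det) :=
    (concaveOn_log_det.translate_right Syy).subset (fun _ hA => hSyy.add_posSemidef hA) hconv
  have hnoise : ConcaveOn ℝ {A : Matrix (Fin m) (Fin m) ℝ | A.PosSemidef}
      (fun A => Real.log (A + σ2 • (1 : Matrix (Fin m) (Fin m) ℝ)).det) :=
    (concaveOn_log_det.translate_left _).subset
      (fun _ hA => (PosDef.one.smul hσ2).add_posSemidef hA) hconv
  have htrace : ConvexOn ℝ {A : Matrix (Fin m) (Fin m) ℝ | A.PosSemidef}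
      (fun A => (Syy⁻¹ * A).trace) :=
    (traceLinearMap (Fin m) ℝ ℝ ∘ₗ LinearMap.mulLeft ℝ Syy⁻¹).convexOn hconv
  refine (((hsignal.neg.smul (sub_nonneg.mpr hl)).add hnoise.neg).add
    (htrace.smul (show 0 ≤ l by linarith))).congr fun A _ => ?_
  simp only [Pi.add_apply, Pi.neg_apply, smul_eq_mul]
  ring
end

section
/- Let H ∈ ℝ^{m×n}, Σ_XX ∈ ℝ^{n×n} positive semidefinite, σ² > 0, λ ≥ 1, and τ > 0. Set Σ_YY = H Σ_XX Hᵀ + σ²I_m and Σ_YAYA = Σ_YY + (1/λ) H Σ_XX Hᵀ. Let p = rank(H Σ_XX Hᵀ), let μ₁ ≥ ··· ≥ μ_p > 0 be the positive eigenvalues of H Σ_XX Hᵀ, and let Δ ∈ ℝ^{p×p} be the diagonal matrix with entries Δ_{ii} = μ_i / (μ_i + σ²). Then the probability, under Y_A ~ N(0, Σ_YAYA), of the event { y : f_YA(y)/f_Y(y) ≥ τ } equals the probability, under U ~ N(0, I_p), of the event { u : uᵀ Δ u ≥ λ ( 2 log τ + log det( I_p + λ⁻¹ Δ ) ) }, where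 f_Y and f_YA are the densities of N(0, Σ_YY) and N(0, Σ_YAYA). -/
/-!
Write `B = H Σ_XX Hᵀ = Q diag(d) Qᵀ` with `Q` orthogonal and put
`T = Q diag(√((1 + λ⁻¹) d + σ²))`. Then `Σ_YAYA = T Tᵀ` and
`Σ_YY = T diag((1 + λ⁻¹ Δ)⁻¹) Tᵀ` with `Δ = d / (d + σ²)`, so in the coordinates `w = T⁻¹ y`
the attacked measurement is standard Gaussian and the likelihood ratio becomes
`det(I + λ⁻¹ Δ)^(-1/2) exp(wᵀ Δ w / (2λ))`; taking logarithms gives the threshold on `wᵀ Δ w`.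
Finally `Δ` vanishes off the `p` coordinates carrying the positive eigenvalues, and the standard
Gaussian restricted to those coordinates is again standard Gaussian.
-/

open MeasureTheory Matrix

/-- Density of the centered multivariate Gaussian `N(0, S)` on `ι → ℝ`. -/
noncomputable def gaussianPdf {ι : Type*} [Fintype ι] [DecidableEq ι]
    (S : Matrix ι ι ℝ) (y : ι → ℝ) : ℝ :=
  (1 / Real.sqrt ((2 * Real.pi) ^ Fintype.card ι * S.det)) *
    Real.exp (-(1 / 2) * (y ⬝ᵥ (S⁻¹ *ᵥ y)))

/-- The centered multivariate Gaussian measure `N(0, S)` on `ι → ℝ`. -/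
noncomputable def gaussianMeasure {ι : Type*} [Fintype ι] [DecidableEq ι]
    (S : Matrix ι ι ℝ) : Measure (ι → ℝ) :=
  MeasureTheory.volume.withDensity fun y => ENNReal.ofReal (gaussianPdf S y)

open ProbabilityTheory

lemma le_inv_sqrt_mul_exp_iff {τ P l q : ℝ} (hτ : 0 < τ) (hP : 0 < P) (hl : 0 < l) :
    τ ≤ (√P)⁻¹ * Real.exp (1 / 2 * (l⁻¹ * q)) ↔ l * (2 * Real.log τ + Real.log P) ≤ q := by
  rw [← Real.log_le_log_iff hτ (by positivity), Real.log_mul (by positivity) (by positivity),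
    Real.log_exp, Real.log_inv, Real.log_sqrt hP.le, ← le_div_iff₀' hl, div_eq_inv_mul q l]
  constructor <;> intro h <;> linarith

lemma MeasureTheory.Measure.pi_map_comp_of_injective {ι κ α : Type*} [Fintype ι] [Fintype κ]
    [MeasurableSpace α] (μ : Measure α) [IsProbabilityMeasure μ] {g : κ → ι}
    (hg : Function.Injective g) :
    (Measure.pi fun _ : ι => μ).map (fun w => w ∘ g) = Measure.pi fun _ : κ => μ := by
  classical
  refine (Measure.pi_eq fun s hs => ?_).symm
  let t : ι → Set α := Function.extend g s fun _ => Set.univ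
  have ht : ∀ i, t (g i) = s i := hg.extend_apply s _
  have ht' : ∀ j ∉ Set.range g, t j = Set.univ := fun j hj => Function.extend_apply' _ _ _ hj
  have hpre : (fun w : ι → α => w ∘ g) ⁻¹' Set.univ.pi s = Set.univ.pi t := by
    ext w
    simp only [Set.mem_preimage, Set.mem_univ_pi, Function.comp_apply]
    refine ⟨fun h j => ?_, fun h i => ht i ▸ h (g i)⟩
    by_cases hj : j ∈ Set.range g
    · obtain ⟨i, rfl⟩ := hj
      exact (ht i).symm ▸ h i
    · simp [ht' j hj]
  rw [Measure.map_apply (by fun_prop) (MeasurableSet.univ_pi hs), hpre, Measure.pi_pi]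
  exact (Fintype.prod_of_injective g hg _ _ (fun j hj => by simp [ht' j hj])
    (fun i => by rw [ht])).symm

section Gaussian

variable {ι : Type*} [Fintype ι] [DecidableEq ι]

lemma measurable_gaussianPdf (S : Matrix ι ι ℝ) : Measurable (gaussianPdf S) := by
  unfold gaussianPdf
  fun_prop

lemma det_one_add_diagonal (δ : ι → ℝ) : (1 + diagonal δ).det = ∏ i, (1 + δ i) := by
  rw [← diagonal_one, diagonal_add, det_diagonal]

lemma gaussianPdf_conj (T S : Matrix ι ι ℝ) (hT : IsUnit T.det) (w : ι → ℝ) :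
    gaussianPdf (T * S * Tᵀ) (T *ᵥ w) = |T.det|⁻¹ * gaussianPdf S w := by
  have hinv (v : ι → ℝ) : T⁻¹ *ᵥ (T *ᵥ v) = v := by
    rw [mulVec_mulVec, nonsing_inv_mul _ hT, one_mulVec]
  have hquad : (T *ᵥ w) ⬝ᵥ ((T * S * Tᵀ)⁻¹ *ᵥ (T *ᵥ w)) = w ⬝ᵥ (S⁻¹ *ᵥ w) := by
    rw [Matrix.mul_inv_rev, Matrix.mul_inv_rev, ← transpose_nonsing_inv, ← mulVec_mulVec,
      ← mulVec_mulVec, hinv, dotProduct_mulVec, vecMul_transpose, hinv]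
  have hsqrt : √((2 * Real.pi) ^ Fintype.card ι * (T * S * Tᵀ).det)
      = |T.det| * √((2 * Real.pi) ^ Fintype.card ι * S.det) := by
    rw [det_mul, det_mul, det_transpose, ← Real.sqrt_sq_eq_abs, ← Real.sqrt_mul (sq_nonneg _)]
    ring_nf
  rw [gaussianPdf, gaussianPdf, hquad, hsqrt]
  simp only [one_div, mul_inv, mul_assoc]

lemma gaussianPdf_mul_transpose (T : Matrix ι ι ℝ) (hT : IsUnit T.det) (w : ι → ℝ) :
    gaussianPdf (T * Tᵀ) (T *ᵥ w) = |T.det|⁻¹ * gaussianPdf 1 w := by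
  simpa using gaussianPdf_conj T 1 hT w

lemma gaussianMeasure_mul_transpose (T : Matrix ι ι ℝ) (hT : IsUnit T.det) :
    gaussianMeasure (T * Tᵀ) = (gaussianMeasure 1).map (T *ᵥ ·) := by
  have hTmeas : Measurable (T *ᵥ · : (ι → ℝ) → ι → ℝ) := by fun_prop
  have hvol : volume.map (T *ᵥ · : (ι → ℝ) → ι → ℝ) = ENNReal.ofReal |T.det⁻¹| • volume :=
    Real.map_matrix_volume_pi_eq_smul_volume_pi hT.ne_zero
  have hdens : Measurable fun y => ENNReal.ofReal (gaussianPdf (T * Tᵀ) y) :=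
    (measurable_gaussianPdf _).ennreal_ofReal
  have hdet : |T.det| * |T.det|⁻¹ = 1 := mul_inv_cancel₀ (abs_ne_zero.mpr hT.ne_zero)
  ext A hA
  rw [Measure.map_apply hTmeas hA, gaussianMeasure, gaussianMeasure, withDensity_apply _ hA,
    withDensity_apply _ (hTmeas hA)]
  calc ∫⁻ y in A, ENNReal.ofReal (gaussianPdf (T * Tᵀ) y)
      = ENNReal.ofReal |T.det| * ∫⁻ y in A, ENNReal.ofReal (gaussianPdf (T * Tᵀ) y)
          ∂(volume.map (T *ᵥ ·)) := by
        rw [hvol, Measure.restrict_smul, lintegral_smul_measure, smul_eq_mul, ← mul_assoc,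
          ← ENNReal.ofReal_mul (abs_nonneg _), abs_inv, hdet, ENNReal.ofReal_one, one_mul]
    _ = ∫⁻ x in (T *ᵥ ·) ⁻¹' A, ENNReal.ofReal (gaussianPdf 1 x) := by
        rw [setLIntegral_map hA hdens hTmeas, ← lintegral_const_mul' _ _ ENNReal.ofReal_ne_top]
        refine lintegral_congr fun x => ?_
        simp only [gaussianPdf_mul_transpose T hT, ← ENNReal.ofReal_mul (abs_nonneg _),
          ← mul_assoc, hdet, one_mul]

lemma gaussianPdf_one_div_gaussianPdf_diagonal (δ : ι → ℝ) (hδ : ∀ i, 0 < 1 + δ i)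
    (w : ι → ℝ) :
    gaussianPdf 1 w / gaussianPdf (diagonal fun i => (1 + δ i)⁻¹) w
      = (√(1 + diagonal δ).det)⁻¹ * Real.exp (1 / 2 * (w ⬝ᵥ (diagonal δ *ᵥ w))) := by
  have hinv : (diagonal fun i => (1 + δ i)⁻¹)⁻¹ = 1 + diagonal δ := by
    refine inv_eq_left_inv ?_
    rw [← diagonal_one, diagonal_add, diagonal_mul_diagonal]
    exact congrArg diagonal (funext fun i => mul_inv_cancel₀ (hδ i).ne')
  have hdet : (diagonal fun i => (1 + δ i)⁻¹).det = ((1 + diagonal δ).det)⁻¹ := by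
    rw [det_diagonal, det_one_add_diagonal, Finset.prod_inv_distrib]
  have hD : 0 < (1 + diagonal δ).det := by
    rw [det_one_add_diagonal]
    exact Finset.prod_pos fun i _ => hδ i
  have hc : 0 < (2 * Real.pi) ^ Fintype.card ι := by positivity
  rw [gaussianPdf, gaussianPdf, hinv, hdet, det_one, inv_one, mul_one, one_mulVec, add_mulVec,
    one_mulVec, dotProduct_add, Real.sqrt_mul hc.le, Real.sqrt_inv, mul_div_mul_comm,
    ← Real.exp_sub]
  congr 1
  · field_simp
  · ring_nf

lemma gaussianPdf_one_eq_prod (y : ι → ℝ) :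
    gaussianPdf 1 y = ∏ i, gaussianPDFReal 0 1 (y i) := by
  have hsqrt : √((2 * Real.pi) ^ Fintype.card ι) = √(2 * Real.pi) ^ Fintype.card ι := by
    rw [Real.sqrt_eq_iff_eq_sq (by positivity) (by positivity), ← pow_mul, mul_comm _ 2, pow_mul,
      Real.sq_sqrt (by positivity)]
  simp only [gaussianPdf, gaussianPDFReal, det_one, inv_one, one_mulVec, mul_one,
    NNReal.coe_one, sub_zero, Finset.prod_mul_distrib, Finset.prod_const, ← Real.exp_sum,
    Finset.card_univ, hsqrt, one_div, inv_pow, dotProduct, Finset.mul_sum]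
  congr 2
  exact Finset.sum_congr rfl fun i _ => by ring

lemma gaussianMeasure_one_eq_pi :
    gaussianMeasure (1 : Matrix ι ι ℝ) = Measure.pi fun _ => gaussianReal 0 1 := by
  refine (Measure.pi_eq fun s hs => ?_).symm
  have hint : ∀ i, Integrable (gaussianPDFReal 0 1) (volume.restrict (s i)) :=
    fun i => (integrable_gaussianPDFReal 0 1).restrict
  simp_rw [gaussianMeasure, withDensity_apply _ (MeasurableSet.univ_pi hs),
    gaussianPdf_one_eq_prod, volume_pi, Measure.restrict_pi_pi,
    gaussianReal_apply_eq_integral 0 one_ne_zero]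
  rw [← ofReal_integral_eq_lintegral_ofReal (Integrable.fintype_prod hint)
      (ae_of_all _ fun y => Finset.prod_nonneg fun i _ => gaussianPDFReal_nonneg 0 1 (y i)),
    integral_fintype_prod_eq_prod,
    ENNReal.ofReal_prod_of_nonneg fun i _ => integral_nonneg fun x => gaussianPDFReal_nonneg 0 1 x]

end Gaussian

section Restriction

variable {ι κ : Type*} [Fintype ι] [DecidableEq ι] [Fintype κ] [DecidableEq κ] {g : κ → ι}
  (hg : Function.Injective g) {δ : ι → ℝ} (hδ : ∀ j ∉ Set.range g, δ j = 0)

include hg hδ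

lemma dotProduct_diagonal_mulVec_comp (w : ι → ℝ) :
    w ⬝ᵥ (diagonal δ *ᵥ w) = (w ∘ g) ⬝ᵥ (diagonal (δ ∘ g) *ᵥ (w ∘ g)) := by
  simp only [dotProduct, mulVec_diagonal, Function.comp_apply]
  exact (Fintype.sum_of_injective g hg _ _ (fun j hj => by simp [hδ j hj]) fun i => rfl).symm

lemma det_one_add_smul_diagonal_comp (c : ℝ) :
    (1 + c • diagonal δ).det = (1 + c • diagonal (δ ∘ g)).det := by
  rw [← diagonal_smul, ← diagonal_smul, det_one_add_diagonal, det_one_add_diagonal]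
  exact (Fintype.prod_of_injective g hg _ _ (fun j hj => by simp [hδ j hj]) fun i => rfl).symm

lemma gaussianMeasure_one_le_quadForm_diagonal_comp (a : ℝ) :
    gaussianMeasure (1 : Matrix ι ι ℝ) {w | a ≤ w ⬝ᵥ (diagonal δ *ᵥ w)}
      = gaussianMeasure (1 : Matrix κ κ ℝ) {u | a ≤ u ⬝ᵥ (diagonal (δ ∘ g) *ᵥ u)} := by
  rw [gaussianMeasure_one_eq_pi, gaussianMeasure_one_eq_pi,
    ← Measure.pi_map_comp_of_injective _ hg,
    Measure.map_apply (by fun_prop) (measurableSet_le measurable_const (by fun_prop))]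
  congr 1
  ext w
  simp only [Set.mem_preimage, Set.mem_ofPred_eq, dotProduct_diagonal_mulVec_comp hg hδ w]

end Restriction

section LikelihoodRatio

variable {ι : Type*} [Fintype ι] [DecidableEq ι]

lemma Matrix.IsHermitian.eigenvectorUnitary_mul_transpose {B : Matrix ι ι ℝ}
    (hB : B.IsHermitian) :
    (hB.eigenvectorUnitary : Matrix ι ι ℝ) * (hB.eigenvectorUnitary : Matrix ι ι ℝ)ᵀ = 1 := by
  simpa [star_eq_conjTranspose] using mem_unitaryGroup_iff.mp hB.eigenvectorUnitary.2

lemma Matrix.IsHermitian.smul_add_smul_one_eq {B : Matrix ι ι ℝ} (hB : B.IsHermitian)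
    (a b : ℝ) :
    a • B + b • 1 = (hB.eigenvectorUnitary : Matrix ι ι ℝ)
      * diagonal (fun j => a * hB.eigenvalues j + b) * (hB.eigenvectorUnitary : Matrix ι ι ℝ)ᵀ := by
  set Q : Matrix ι ι ℝ := (hB.eigenvectorUnitary : Matrix ι ι ℝ)
  have hQ : Q * Qᵀ = 1 := hB.eigenvectorUnitary_mul_transpose
  have hspec : B = Q * diagonal hB.eigenvalues * Qᵀ := by
    conv_lhs => rw [hB.spectral_theorem]
    simp [Q, Unitary.conjStarAlgAut_apply, star_eq_conjTranspose]
  have hdiag : diagonal (fun j => a * hB.eigenvalues j + b)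
      = a • diagonal hB.eigenvalues + b • 1 := by
    rw [smul_one_eq_diagonal, ← diagonal_smul, diagonal_add]
    rfl
  rw [hdiag, Matrix.mul_add, Matrix.add_mul, Matrix.mul_smul, Matrix.smul_mul, Matrix.mul_smul,
    Matrix.smul_mul, Matrix.mul_one, hQ, ← hspec]

lemma Matrix.mul_diagonal_mul_diagonal_mul_transpose (Q : Matrix ι ι ℝ) (r v : ι → ℝ) :
    Q * diagonal r * diagonal v * (Q * diagonal r)ᵀ
      = Q * diagonal (fun j => r j ^ 2 * v j) * Qᵀ := by
  rw [transpose_mul, diagonal_transpose, Matrix.mul_assoc Q, diagonal_mul_diagonal,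
    ← Matrix.mul_assoc, Matrix.mul_assoc Q, diagonal_mul_diagonal]
  congr 3 with j
  ring

lemma Matrix.PosSemidef.exists_simultaneous_factorization {B : Matrix ι ι ℝ}
    (hB : B.PosSemidef) {σ2 l : ℝ} (hσ2 : 0 < σ2) (hl : 0 < l) :
    ∃ T : Matrix ι ι ℝ, IsUnit T.det ∧ B + σ2 • 1 + l⁻¹ • B = T * Tᵀ ∧
      B + σ2 • 1 = T * diagonal (fun j =>
        (1 + l⁻¹ * (hB.1.eigenvalues j / (hB.1.eigenvalues j + σ2)))⁻¹) * Tᵀ := by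
  set d := hB.1.eigenvalues
  set Q : Matrix ι ι ℝ := (hB.1.eigenvectorUnitary : Matrix ι ι ℝ)
  have hd : ∀ j, 0 ≤ d j := hB.eigenvalues_nonneg
  have hs : ∀ j, 0 < (1 + l⁻¹) * d j + σ2 := fun j => by
    have := hd j
    positivity
  refine ⟨Q * diagonal fun j => √((1 + l⁻¹) * d j + σ2), ?_, ?_, ?_⟩
  · rw [det_mul, det_diagonal]
    exact (isUnit_det_of_right_inverse hB.1.eigenvectorUnitary_mul_transpose).mul
      (isUnit_iff_ne_zero.mpr (Finset.prod_ne_zero_iff.mpr fun j _ =>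
        (Real.sqrt_pos.mpr (hs j)).ne'))
  · have h := mul_diagonal_mul_diagonal_mul_transpose Q
      (fun j => √((1 + l⁻¹) * d j + σ2)) fun _ => 1
    rw [diagonal_one, Matrix.mul_one] at h
    rw [show B + σ2 • 1 + l⁻¹ • B = (1 + l⁻¹) • B + σ2 • 1 by module,
      hB.1.smul_add_smul_one_eq, h]
    congr 3 with j
    rw [Real.sq_sqrt (hs j).le, mul_one]
  · rw [← one_smul ℝ B, hB.1.smul_add_smul_one_eq, mul_diagonal_mul_diagonal_mul_transpose]
    congr 3 with j
    have := hd j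
    rw [Real.sq_sqrt (hs j).le]
    field_simp
    ring

theorem gaussianMeasure_setOf_le_likelihoodRatio {B : Matrix ι ι ℝ} (hB : B.PosSemidef)
    {σ2 l τ : ℝ} (hσ2 : 0 < σ2) (hl : 0 < l) (hτ : 0 < τ) :
    gaussianMeasure (B + σ2 • 1 + l⁻¹ • B)
      {y | τ ≤ gaussianPdf (B + σ2 • 1 + l⁻¹ • B) y / gaussianPdf (B + σ2 • 1) y}
      = gaussianMeasure 1 {w | l * (2 * Real.log τ + Real.log
          (1 + l⁻¹ • diagonal (fun j => hB.1.eigenvalues j / (hB.1.eigenvalues j + σ2))).det)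
        ≤ w ⬝ᵥ (diagonal (fun j => hB.1.eigenvalues j / (hB.1.eigenvalues j + σ2)) *ᵥ w)} := by
  set Δ : ι → ℝ := fun j => hB.1.eigenvalues j / (hB.1.eigenvalues j + σ2)
  have hΔ : ∀ j, 0 < 1 + l⁻¹ * Δ j := fun j => by
    have := hB.eigenvalues_nonneg j
    positivity
  obtain ⟨T, hT, hA, hY⟩ := hB.exists_simultaneous_factorization hσ2 hl
  have hmeas : MeasurableSet {y | τ ≤ gaussianPdf (T * Tᵀ) y
      / gaussianPdf (T * diagonal (fun j => (1 + l⁻¹ * Δ j)⁻¹) * Tᵀ) y} :=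
    measurableSet_le measurable_const
      ((measurable_gaussianPdf _).div (measurable_gaussianPdf _))
  have hdet : (1 + diagonal fun j => l⁻¹ * Δ j).det = (1 + l⁻¹ • diagonal Δ).det := by
    rw [← diagonal_smul]
    rfl
  have hquad (w : ι → ℝ) :
      w ⬝ᵥ (diagonal (fun j => l⁻¹ * Δ j) *ᵥ w) = l⁻¹ * (w ⬝ᵥ (diagonal Δ *ᵥ w)) := by
    rw [← smul_eq_mul, ← dotProduct_smul, ← smul_mulVec, ← diagonal_smul]
    rfl
  rw [hA, hY, gaussianMeasure_mul_transpose T hT, Measure.map_apply (by fun_prop) hmeas]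
  congr 1
  ext w
  simp only [Set.mem_preimage, Set.mem_ofPred_eq]
  rw [gaussianPdf_mul_transpose T hT, gaussianPdf_conj T _ hT,
    mul_div_mul_left _ _ (inv_ne_zero (abs_ne_zero.mpr hT.ne_zero)),
    gaussianPdf_one_div_gaussianPdf_diagonal (fun j => l⁻¹ * Δ j) hΔ, hdet, hquad]
  exact le_inv_sqrt_mul_exp_iff hτ
    (by rw [← hdet, det_one_add_diagonal]; exact Finset.prod_pos fun j _ => hΔ j) hl

end LikelihoodRatio

theorem prob_detection_eq_general (m n : ℕ)
    (H : Matrix (Fin m) (Fin n) ℝ) (Sxx : Matrix (Fin n) (Fin n) ℝ)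
    (hSxx : Sxx.PosSemidef) (σ2 : ℝ) (hσ2 : 0 < σ2) (l : ℝ) (hl : 1 ≤ l)
    (τ : ℝ) (hτ : 0 < τ)
    (p : ℕ) (μ : Fin p → ℝ)
    (hB : (H * Sxx * Hᵀ).IsHermitian)
    (g : Fin p → Fin m) (hg : Function.Injective g)
    (hgval : ∀ i, hB.eigenvalues (g i) = μ i)
    (hgzero : ∀ j, j ∉ Set.range g → hB.eigenvalues j = 0) :
    gaussianMeasure (H * Sxx * Hᵀ + σ2 • (1 : Matrix (Fin m) (Fin m) ℝ)
        + l⁻¹ • (H * Sxx * Hᵀ))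
      {y : Fin m → ℝ |
        τ ≤ gaussianPdf (H * Sxx * Hᵀ + σ2 • (1 : Matrix (Fin m) (Fin m) ℝ)
              + l⁻¹ • (H * Sxx * Hᵀ)) y
            / gaussianPdf (H * Sxx * Hᵀ + σ2 • (1 : Matrix (Fin m) (Fin m) ℝ)) y}
      = gaussianMeasure (1 : Matrix (Fin p) (Fin p) ℝ)
          {u : Fin p → ℝ |
            l * (2 * Real.log τ
                + Real.log (1 + l⁻¹ • Matrix.diagonal (fun i => μ i / (μ i + σ2))).det)
              ≤ u ⬝ᵥ (Matrix.diagonal (fun i => μ i / (μ i + σ2)) *ᵥ u)} := by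
  have hpsd : (H * Sxx * Hᵀ).PosSemidef := by
    simpa using hSxx.mul_mul_conjTranspose_same H
  set Δ : Fin m → ℝ := fun j => hB.eigenvalues j / (hB.eigenvalues j + σ2)
  have hΔ : ∀ j ∉ Set.range g, Δ j = 0 := fun j hj => by simp [Δ, hgzero j hj]
  have hΔg : Δ ∘ g = fun i => μ i / (μ i + σ2) := funext fun i => by simp [Δ, hgval]
  rw [gaussianMeasure_setOf_le_likelihoodRatio hpsd hσ2 (by linarith) hτ,
    det_one_add_smul_diagonal_comp hg hΔ, gaussianMeasure_one_le_quadForm_diagonal_comp hg hΔ, hΔg]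

/-- Lemma 1: the probability, under the attacked measurement distribution
`N(0, Σ_YAYA)` with `Σ_YAYA = H Σ_XX Hᵀ + σ²I + (1/λ) H Σ_XX Hᵀ`, that the likelihood ratio
against `N(0, Σ_YY)`, `Σ_YY = H Σ_XX Hᵀ + σ²I`, exceeds `τ` equals the probability, under a
standard Gaussian `U ~ N(0, I_p)` with `p = rank(H Σ_XX Hᵀ)`, that
`Uᵀ Δ U ≥ λ (2 log τ + log det(I_p + λ⁻¹ Δ))`, where `Δ` is diagonal with entries
`μ_i/(μ_i + σ²)` and `μ₁ ≥ ⋯ ≥ μ_p > 0` are the positive eigenvalues of `H Σ_XX Hᵀ`. -/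
theorem prob_detection_eq (m n : ℕ)
    (H : Matrix (Fin m) (Fin n) ℝ) (Sxx : Matrix (Fin n) (Fin n) ℝ)
    (hSxx : Sxx.PosSemidef) (σ2 : ℝ) (hσ2 : 0 < σ2) (l : ℝ) (hl : 1 ≤ l)
    (τ : ℝ) (hτ : 0 < τ)
    (p : ℕ) (μ : Fin p → ℝ) (hμpos : ∀ i, 0 < μ i) (hμdesc : Antitone μ)
    (hp : p = (H * Sxx * Hᵀ).rank)
    (hB : (H * Sxx * Hᵀ).IsHermitian)
    (g : Fin p → Fin m) (hg : Function.Injective g)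
    (hgval : ∀ i, hB.eigenvalues (g i) = μ i)
    (hgzero : ∀ j, j ∉ Set.range g → hB.eigenvalues j = 0) :
    gaussianMeasure (H * Sxx * Hᵀ + σ2 • (1 : Matrix (Fin m) (Fin m) ℝ)
        + l⁻¹ • (H * Sxx * Hᵀ))
      {y : Fin m → ℝ |
        τ ≤ gaussianPdf (H * Sxx * Hᵀ + σ2 • (1 : Matrix (Fin m) (Fin m) ℝ)
              + l⁻¹ • (H * Sxx * Hᵀ)) y
            / gaussianPdf (H * Sxx * Hᵀ + σ2 • (1 : Matrix (Fin m) (Fin m) ℝ)) y}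
      = gaussianMeasure (1 : Matrix (Fin p) (Fin p) ℝ)
          {u : Fin p → ℝ |
            l * (2 * Real.log τ
                + Real.log (1 + l⁻¹ • Matrix.diagonal (fun i => μ i / (μ i + σ2))).det)
              ≤ u ⬝ᵥ (Matrix.diagonal (fun i => μ i / (μ i + σ2)) *ᵥ u)} :=
  prob_detection_eq_general m n H Sxx hSxx σ2 hσ2 l hl τ hτ p μ hB g hg hgval hgzero
end

section
/- Let p be a natural number, let Δ ∈ ℝ^{p×p} be a nonzero diagonal matrix with diagonal entries in [0, 1], let τ > 1, let t > 0, and let U ~ N(0, I_p) be a standard Gaussian vector in ℝ^p. Let λ*(t) be the unique positive solution of 2 λ log τ − tr(Δ²)/(2λ) − 2 √( tr(Δ²) t ) − 2 ‖Δ‖_∞ t = 0, where ‖Δ‖_∞ is the largest diagonal entry of Δ. Then for every λ ≥ max(λ*(t), 1), ℙ[ Uᵀ Δ U ≥ λ ( 2 log τ + log det( I_p + λ⁻¹ Δ ) ) ] ≤ e^{−t}; consequently the probability of detection of the generalized stealth attack with weighting parameter λ by the likelihood ratio test with threshold τ is at most e^{−t}. -/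
open MeasureTheory ProbabilityTheory Matrix

/-- The standard Gaussian measure `N(0, I_p)` on `Fin p → ℝ`. -/
noncomputable def stdGaussian (p : ℕ) : Measure (Fin p → ℝ) :=
  Measure.pi fun _ => gaussianReal 0 1

/-!
Chernoff's bound: for `0 ≤ s` with `2 s ‖Δ‖_∞ < 1` the moment generating function of
`Uᵀ Δ U = ∑ dᵢ Uᵢ²` is `∏ (1 - 2 s dᵢ)^{-1/2}`, and `-log (1 - x) ≤ x + x² / (2 (1 - x))` bounds its
logarithm by `s tr Δ + s² tr Δ² / (1 - 2 s ‖Δ‖_∞)`. Optimizing in `s` gives the Laurent–Massart tail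
`ℙ[Uᵀ Δ U ≥ tr Δ + 2 √(tr Δ² t) + 2 ‖Δ‖_∞ t] ≤ e^{-t}`. The detection threshold lies above this level:
`log (1 + x) ≥ x - x² / 2` gives `λ log det (I + λ⁻¹ Δ) ≥ tr Δ - tr Δ² / (2 λ)`, and
`λ ↦ 2 λ log τ - tr Δ² / (2 λ)` is increasing and equals `2 √(tr Δ² t) + 2 ‖Δ‖_∞ t` at `λ*`.
-/

open Real Finset

lemma Real.sub_sq_div_two_le_log_one_add {x : ℝ} (hx : 0 ≤ x) : x - x ^ 2 / 2 ≤ log (1 + x) := by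
  refine le_trans ?_ (le_log_one_add_of_nonneg hx)
  rw [le_div_iff₀ (by linarith)]
  nlinarith [pow_nonneg hx 3]

/-- With `y = (1 - x)⁻¹`, this is `log y ≤ sinh (log y) = (y - y⁻¹) / 2`. -/
lemma Real.neg_log_one_sub_le {x : ℝ} (hx0 : 0 ≤ x) (hx1 : x < 1) :
    -log (1 - x) ≤ x + x ^ 2 / (2 * (1 - x)) := by
  have hy : 0 < 1 - x := by linarith
  have h := self_le_sinh_iff.2 (log_nonneg (one_le_inv₀ hy |>.2 (by linarith)))
  rw [sinh_log (inv_pos.2 hy), log_inv, inv_inv] at h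
  convert h using 1
  field_simp
  ring

lemma integral_exp_mul_sq_gaussianReal {c : ℝ} (hc : 2 * c < 1) :
    ∫ x, exp (c * x ^ 2) ∂gaussianReal 0 1 = (√(1 - 2 * c))⁻¹ := by
  have hb : 0 < 1 / 2 - c := by linarith
  have hpdf : ∀ x, gaussianPDFReal 0 1 x • exp (c * x ^ 2)
      = (√(2 * π))⁻¹ * exp (-(1 / 2 - c) * x ^ 2) := fun x => by
    simp only [gaussianPDFReal, NNReal.coe_one, mul_one, sub_zero, smul_eq_mul]
    rw [mul_assoc, ← exp_add]
    ring_nf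
  rw [integral_gaussianReal_eq_integral_smul one_ne_zero, integral_congr_ae (ae_of_all _ hpdf),
    integral_const_mul, integral_gaussian, ← sqrt_inv, ← sqrt_inv, ← sqrt_mul (by positivity)]
  congr 1
  field_simp

lemma integrable_exp_mul_sq_gaussianReal {c : ℝ} (hc : 2 * c < 1) :
    Integrable (fun x => exp (c * x ^ 2)) (gaussianReal 0 1) :=
  .of_integral_ne_zero <| by
    rw [integral_exp_mul_sq_gaussianReal hc]
    exact (inv_pos.2 (sqrt_pos.2 (by linarith))).ne'

instance (p : ℕ) : IsProbabilityMeasure (stdGaussian p) := by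
  unfold _root_.stdGaussian; infer_instance

lemma dotProduct_diagonal_mulVec_self {ι : Type*} [Fintype ι] [DecidableEq ι] (d u : ι → ℝ) :
    u ⬝ᵥ (diagonal d *ᵥ u) = ∑ i, d i * u i ^ 2 := by
  simp only [dotProduct, mulVec_diagonal]
  exact sum_congr rfl fun i _ => by ring

section QuadForm

variable {p : ℕ} {d : Fin p → ℝ} {s : ℝ}

lemma exp_mul_dotProduct_diagonal_mulVec_self (u : Fin p → ℝ) :
    exp (s * (u ⬝ᵥ (diagonal d *ᵥ u))) = ∏ i, exp (s * d i * u i ^ 2) := by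
  rw [dotProduct_diagonal_mulVec_self, mul_sum, exp_sum]
  simp only [mul_assoc]

lemma mgf_quadForm_stdGaussian (h : ∀ i, 2 * (s * d i) < 1) :
    mgf (fun u => u ⬝ᵥ (diagonal d *ᵥ u)) (stdGaussian p) s = ∏ i, (√(1 - 2 * (s * d i)))⁻¹ := by
  simp only [mgf, exp_mul_dotProduct_diagonal_mulVec_self]
  rw [_root_.stdGaussian, integral_fintype_prod_eq_prod (fun i x => exp (s * d i * x ^ 2))]
  exact prod_congr rfl fun i _ => integral_exp_mul_sq_gaussianReal (h i)

lemma integrable_exp_mul_quadForm_stdGaussian (h : ∀ i, 2 * (s * d i) < 1) :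
    Integrable (fun u => exp (s * (u ⬝ᵥ (diagonal d *ᵥ u)))) (stdGaussian p) := by
  simp only [exp_mul_dotProduct_diagonal_mulVec_self]
  exact Integrable.fintype_prod fun i => integrable_exp_mul_sq_gaussianReal (h i)

lemma mgf_quadForm_stdGaussian_le {b : ℝ} (hd : ∀ i, 0 ≤ d i) (hdb : ∀ i, d i ≤ b) (hs : 0 ≤ s)
    (hsb : 2 * s * b < 1) :
    mgf (fun u => u ⬝ᵥ (diagonal d *ᵥ u)) (stdGaussian p) s
      ≤ exp (s * ∑ i, d i + s ^ 2 * (∑ i, d i ^ 2) / (1 - 2 * s * b)) := by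
  have hx0 : ∀ i, 0 ≤ 2 * (s * d i) := fun i => by have := hd i; positivity
  have hxb : ∀ i, 2 * (s * d i) ≤ 2 * s * b := fun i => by
    linarith [mul_le_mul_of_nonneg_left (hdb i) hs]
  have hx1 : ∀ i, 2 * (s * d i) < 1 := fun i => (hxb i).trans_lt hsb
  have hterm : ∀ i, -(log (1 - 2 * (s * d i)) / 2)
      ≤ s * d i + s ^ 2 * d i ^ 2 / (1 - 2 * s * b) := by
    intro i
    have h := neg_log_one_sub_le (hx0 i) (hx1 i)
    have : (2 * (s * d i)) ^ 2 / (2 * (1 - 2 * (s * d i)))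
        ≤ (2 * (s * d i)) ^ 2 / (2 * (1 - 2 * s * b)) :=
      div_le_div_of_nonneg_left (sq_nonneg _) (by linarith) (by linarith [hxb i])
    have : (2 * (s * d i)) ^ 2 / (2 * (1 - 2 * s * b))
        = 2 * (s ^ 2 * d i ^ 2 / (1 - 2 * s * b)) := by
      field_simp
    linarith
  have hpos : ∀ i, 0 < 1 - 2 * (s * d i) := fun i => by linarith [hx1 i]
  rw [mgf_quadForm_stdGaussian hx1, ← exp_log (prod_pos fun i _ => by have := hpos i; positivity),
    exp_le_exp, log_prod fun i _ => by have := hpos i; positivity]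
  simp only [log_inv, log_sqrt (hpos _).le]
  calc ∑ i, -(log (1 - 2 * (s * d i)) / 2)
      ≤ ∑ i, (s * d i + s ^ 2 * d i ^ 2 / (1 - 2 * s * b)) := sum_le_sum fun i _ => hterm i
    _ = s * ∑ i, d i + s ^ 2 * (∑ i, d i ^ 2) / (1 - 2 * s * b) := by
      rw [sum_add_distrib, mul_sum, mul_sum, sum_div]

/-- **Laurent–Massart** upper tail bound for a nonnegative Gaussian quadratic form. -/
theorem stdGaussian_quadForm_tail_le {b t : ℝ} (hd : ∀ i, 0 ≤ d i) (hdb : ∀ i, d i ≤ b)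
    (hd0 : d ≠ 0) (ht : 0 ≤ t) :
    stdGaussian p {u | ∑ i, d i + 2 * √((∑ i, d i ^ 2) * t) + 2 * b * t ≤ u ⬝ᵥ (diagonal d *ᵥ u)}
      ≤ ENNReal.ofReal (exp (-t)) := by
  set v := ∑ i, d i ^ 2
  obtain ⟨j, hj⟩ := Function.ne_iff.1 hd0
  have hv : 0 < v := lt_of_lt_of_le (pow_pos ((hd j).lt_of_ne' hj) 2)
    (single_le_sum (fun i _ => sq_nonneg (d i)) (mem_univ j))
  have hb : 0 ≤ b := (hd j).trans (hdb j)
  have hD : 0 < √v + 2 * b * √t := by have := sqrt_pos.2 hv; positivity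
  -- the optimal Chernoff parameter
  set s := √t / (√v + 2 * b * √t) with hs_def
  have hs : 0 ≤ s := by positivity
  have h1sb : 1 - 2 * s * b = √v / (√v + 2 * b * √t) := by
    rw [hs_def]
    field_simp
    ring
  have hsb : 2 * s * b < 1 := by
    have := div_pos (sqrt_pos.2 hv) hD
    linarith
  have hexp : s * (2 * √(v * t) + 2 * b * t) - s ^ 2 * v / (1 - 2 * s * b) = t := by
    rw [h1sb, sqrt_mul hv.le, hs_def]
    field_simp
    linear_combination (2 * √v ^ 2 - v) * sq_sqrt ht + t * sq_sqrt hv.le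
  have hsd : ∀ i, 2 * (s * d i) < 1 := fun i => by
    linarith [mul_le_mul_of_nonneg_left (hdb i) hs]
  rw [← ofReal_measureReal]
  refine ENNReal.ofReal_le_ofReal ?_
  calc _ ≤ exp (-s * (∑ i, d i + 2 * √(v * t) + 2 * b * t))
        * mgf (fun u => u ⬝ᵥ (diagonal d *ᵥ u)) (stdGaussian p) s :=
        measure_ge_le_exp_mul_mgf _ hs (integrable_exp_mul_quadForm_stdGaussian hsd)
    _ ≤ exp (-s * (∑ i, d i + 2 * √(v * t) + 2 * b * t))
        * exp (s * ∑ i, d i + s ^ 2 * v / (1 - 2 * s * b)) := by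
        gcongr
        exact mgf_quadForm_stdGaussian_le hd hdb hs hsb
    _ = exp (-t) := by
        rw [← exp_add]
        congr 1
        linarith

end QuadForm

lemma sum_sub_le_mul_log_det_one_add_smul_diagonal {n : Type*} [Fintype n] [DecidableEq n]
    {d : n → ℝ} (hd : ∀ i, 0 ≤ d i) {l : ℝ} (hl : 0 < l) :
    ∑ i, d i - (∑ i, d i ^ 2) / (2 * l)
      ≤ l * log ((1 : Matrix n n ℝ) + l⁻¹ • diagonal d).det := by
  have hdet : ((1 : Matrix n n ℝ) + l⁻¹ • diagonal d).det = ∏ i, (1 + l⁻¹ * d i) := by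
    rw [← diagonal_one, ← diagonal_smul, diagonal_add, det_diagonal]
    rfl
  have hx : ∀ i, 0 ≤ l⁻¹ * d i := fun i => mul_nonneg (inv_pos.2 hl).le (hd i)
  rw [hdet, log_prod fun i _ => by linarith [hx i], mul_sum, sum_div, ← sum_sub_distrib]
  refine sum_le_sum fun i _ => (Eq.le ?_).trans
    (mul_le_mul_of_nonneg_left (sub_sq_div_two_le_log_one_add (hx i)) hl.le)
  field_simp

theorem prob_detection_le_exp_general (p : ℕ) (d : Fin p → ℝ)
    (hd : ∀ i, d i ∈ Set.Icc (0 : ℝ) 1) (hd0 : d ≠ 0)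
    (τ t : ℝ) (hτ : 1 < τ) (ht : 0 < t)
    (lstar : ℝ) (hlstar : 0 < lstar)
    (heq : 2 * lstar * Real.log τ - (∑ i, d i ^ 2) / (2 * lstar)
        - 2 * Real.sqrt ((∑ i, d i ^ 2) * t) - 2 * (⨆ i, d i) * t = 0) :
    ∀ l : ℝ, max lstar 1 ≤ l →
      stdGaussian p
          {u : Fin p → ℝ |
            l * (2 * Real.log τ
                + Real.log ((1 : Matrix (Fin p) (Fin p) ℝ) + l⁻¹ • Matrix.diagonal d).det)
              ≤ u ⬝ᵥ (Matrix.diagonal d *ᵥ u)}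
        ≤ ENNReal.ofReal (Real.exp (-t)) := by
  intro l hl
  have hlstar_le : lstar ≤ l := le_of_max_le_left hl
  have hl0 : 0 < l := hlstar.trans_le hlstar_le
  have hd_nonneg : ∀ i, 0 ≤ d i := fun i => (hd i).1
  have hd_le : ∀ i, d i ≤ ⨆ i, d i := le_ciSup (Finite.bddAbove_range d)
  have hlog := sum_sub_le_mul_log_det_one_add_smul_diagonal hd_nonneg hl0
  have hmono : 2 * lstar * log τ - (∑ i, d i ^ 2) / (2 * lstar)
      ≤ 2 * l * log τ - (∑ i, d i ^ 2) / (2 * l) := by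
    have : 0 ≤ log τ := (log_pos hτ).le
    have : 0 ≤ ∑ i, d i ^ 2 := sum_nonneg fun i _ => sq_nonneg (d i)
    gcongr
  have hthreshold : ∑ i, d i + 2 * √((∑ i, d i ^ 2) * t) + 2 * (⨆ i, d i) * t
      ≤ l * (2 * log τ + log ((1 : Matrix (Fin p) (Fin p) ℝ) + l⁻¹ • diagonal d).det) := by
    linarith
  exact (measure_mono fun u (hu : _ ≤ _) => hthreshold.trans hu).trans
    (stdGaussian_quadForm_tail_le hd_nonneg hd_le hd0 ht.le)

/-- Theorem 2: let `Δ` be a nonzero diagonal matrix with entries `d_i ∈ [0,1]`, `τ > 1`,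
`t > 0`, and let `λ*(t)` be the unique positive solution of
`2λ log τ − tr(Δ²)/(2λ) − 2√(tr(Δ²) t) − 2‖Δ‖_∞ t = 0`. Then for every
`λ ≥ max(λ*(t), 1)`, the probability of detection
`ℙ[Uᵀ Δ U ≥ λ(2 log τ + log det(I + λ⁻¹ Δ))]` under `U ~ N(0, I_p)` is at most `e^{−t}`. -/
theorem prob_detection_le_exp (p : ℕ) (d : Fin p → ℝ)
    (hd : ∀ i, d i ∈ Set.Icc (0 : ℝ) 1) (hd0 : d ≠ 0)
    (τ t : ℝ) (hτ : 1 < τ) (ht : 0 < t)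
    (lstar : ℝ) (hlstar : 0 < lstar)
    (heq : 2 * lstar * Real.log τ - (∑ i, d i ^ 2) / (2 * lstar)
        - 2 * Real.sqrt ((∑ i, d i ^ 2) * t) - 2 * (⨆ i, d i) * t = 0)
    (huniq : ∀ l : ℝ, 0 < l →
        2 * l * Real.log τ - (∑ i, d i ^ 2) / (2 * l)
            - 2 * Real.sqrt ((∑ i, d i ^ 2) * t) - 2 * (⨆ i, d i) * t = 0 →
        l = lstar) :
    ∀ l : ℝ, max lstar 1 ≤ l →
      stdGaussian p
          {u : Fin p → ℝ |
            l * (2 * Real.log τ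
                + Real.log ((1 : Matrix (Fin p) (Fin p) ℝ) + l⁻¹ • Matrix.diagonal d).det)
              ≤ u ⬝ᵥ (Matrix.diagonal d *ᵥ u)}
        ≤ ENNReal.ofReal (Real.exp (-t)) :=
  prob_detection_le_exp_general p d hd hd0 τ t hτ ht lstar hlstar heq
end
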